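/- Let μ be any Möbius function for 𝒢. If G is a vertex transitive finite simple graph and H is any finite simple graph with |H| < |G| − 1, then μ(H,G) = 0. -/

import Mathlib

/-!
Delete a vertex `v` of `G` to get `K` with `|K| = |G| - 1`. A proper induced subgraph of `G`
misses some vertex, and an automorphism moves that vertex to `v`, so by vertex transitivity
every proper induced subgraph of `G` is induced-contained in `K`. Thus `[H,G]` is `[H,K]`
together with `G`; the defining sums of `μ(H,·)` over both intervals vanish (as `|H| < |K|`),
and their difference is `μ(H,G)`.
-/

open SimpleGraph

/-- A finite simple graph, encoded by its number of vertices together with a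
simple graph structure on `Fin n`. -/
def FinGraph : Type := Σ n : ℕ, SimpleGraph (Fin n)

namespace FinGraph

/-- The number of vertices of a graph. -/
def order (G : FinGraph) : ℕ := G.1

/-- Induced containment `H ⊴ G`: there is an injection of the vertices of `H`
into the vertices of `G` which preserves and reflects adjacency (equivalently,
`H` is isomorphic to an induced subgraph of `G`). -/
def Contains (H G : FinGraph) : Prop :=
  ∃ f : Fin H.1 ↪ Fin G.1, ∀ a b : Fin H.1, G.2.Adj (f a) (f b) ↔ H.2.Adj a b

/-- Isomorphism of finite graphs. -/
def Iso (H G : FinGraph) : Prop := Nonempty (H.2 ≃g G.2)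

/-- Package a simple graph on an arbitrary finite vertex type as a `FinGraph`. -/
noncomputable def of {V : Type} [Fintype V] (G : SimpleGraph V) : FinGraph :=
  ⟨Fintype.card V, G.comap ⇑(Fintype.equivFin V).symm⟩

end FinGraph

/-- `T` is a transversal of the interval `[H,G]`: every member lies in `[H,G]`,
distinct members are non-isomorphic, and every graph in `[H,G]` is isomorphic to
a member of `T`. -/
def IsTransversal (H G : FinGraph) (T : Finset FinGraph) : Prop :=
  (∀ X ∈ T, H.Contains X ∧ X.Contains G) ∧
  (∀ X ∈ T, ∀ Y ∈ T, X ≠ Y → ¬ X.Iso Y) ∧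
  (∀ X : FinGraph, H.Contains X → X.Contains G → ∃ Y ∈ T, X.Iso Y)

/-- `mu` is a Möbius function for the poset `𝒢` of all finite simple graphs up to
isomorphism, ordered by induced containment: it is isomorphism invariant, vanishes
on non-comparable pairs, and for every `H ⊴ G` the sum of `mu H ·` over any
transversal of `[H,G]` is `1` if `H ≅ G` and `0` otherwise. -/
def IsMobius (mu : FinGraph → FinGraph → ℤ) : Prop :=
  (∀ H H' G G' : FinGraph, H.Iso H' → G.Iso G' → mu H G = mu H' G') ∧
  (∀ H G : FinGraph, ¬ H.Contains G → mu H G = 0) ∧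
  (∀ H G : FinGraph, H.Contains G → ∀ T : Finset FinGraph, IsTransversal H G T →
    (H.Iso G → ∑ X ∈ T, mu H X = 1) ∧ (¬ H.Iso G → ∑ X ∈ T, mu H X = 0))

namespace FinGraph

theorem Iso.refl (G : FinGraph) : G.Iso G := ⟨.refl⟩

theorem Iso.symm {H G : FinGraph} (h : H.Iso G) : G.Iso H := ⟨h.some.symm⟩

theorem Iso.trans {H G K : FinGraph} (h : H.Iso G) (h' : G.Iso K) : H.Iso K :=
  ⟨h.some.trans h'.some⟩

theorem Iso.order_eq {H G : FinGraph} (h : H.Iso G) : H.order = G.order := by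
  simpa [order] using Fintype.card_congr h.some.toEquiv

theorem contains_iff_nonempty_embedding {H G : FinGraph} :
    H.Contains G ↔ Nonempty (H.2 ↪g G.2) :=
  ⟨fun ⟨f, hf⟩ => ⟨⟨f, hf _ _⟩⟩,
    fun ⟨f⟩ => ⟨f.toEmbedding, fun _ _ => f.map_rel_iff⟩⟩

theorem Iso.contains {H G : FinGraph} (h : H.Iso G) : H.Contains G :=
  contains_iff_nonempty_embedding.2 ⟨h.some.toEmbedding⟩

theorem Contains.trans {H G K : FinGraph} (h : H.Contains G) (h' : G.Contains K) :
    H.Contains K := by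
  rw [contains_iff_nonempty_embedding] at *
  exact ⟨h'.some.comp h.some⟩

theorem Contains.order_le {H G : FinGraph} (h : H.Contains G) : H.order ≤ G.order := by
  obtain ⟨f, -⟩ := h
  simpa [order] using Fintype.card_le_of_embedding f

theorem Contains.iso_of_order_eq {H G : FinGraph} (h : H.Contains G)
    (hHG : H.order = G.order) : H.Iso G := by
  obtain ⟨f, hf⟩ := h
  have hbij : Function.Bijective f :=
    (Fintype.bijective_iff_injective_and_card f).2 ⟨f.injective, by simpa [order] using hHG⟩
  exact ⟨⟨Equiv.ofBijective f hbij, hf _ _⟩⟩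

theorem Contains.order_lt_of_not_iso {H G : FinGraph} (h : H.Contains G) (hHG : ¬H.Iso G) :
    H.order < G.order :=
  h.order_le.lt_of_ne fun hord => hHG (h.iso_of_order_eq hord)

theorem Contains.antisymm {H G : FinGraph} (h : H.Contains G) (h' : G.Contains H) :
    H.Iso G :=
  h.iso_of_order_eq (h.order_le.antisymm h'.order_le)

noncomputable def isoOf {V : Type} [Fintype V] (A : SimpleGraph V) : (of A).2 ≃g A :=
  SimpleGraph.Iso.comap _ A

noncomputable def deleteVertex (G : FinGraph) (v : Fin G.1) : FinGraph :=
  of (G.2.induce {v}ᶜ)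

theorem order_deleteVertex (G : FinGraph) (v : Fin G.1) :
    (G.deleteVertex v).order = G.order - 1 := by
  simp [deleteVertex, of, order, Finset.filter_ne', Finset.card_erase_of_mem]

theorem deleteVertex_contains (G : FinGraph) (v : Fin G.1) : (G.deleteVertex v).Contains G :=
  contains_iff_nonempty_embedding.2 ⟨(Embedding.induce _).comp (isoOf _).toEmbedding⟩

theorem contains_deleteVertex_of_notMem_range {X G : FinGraph} (f : X.2 ↪g G.2) (v : Fin G.1)
    (hv : v ∉ Set.range f) : X.Contains (G.deleteVertex v) :=
  contains_iff_nonempty_embedding.2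
    ⟨(isoOf _).symm.toEmbedding.comp <|
      (G.2.induceHomOfLE (Set.subset_compl_singleton_iff.2 hv)).comp f.isoInduceRange.toEmbedding⟩

theorem contains_deleteVertex_of_order_lt {X G : FinGraph}
    (hvt : ∀ u v : Fin G.1, ∃ e : G.2 ≃g G.2, e u = v) (v : Fin G.1) (hX : X.Contains G)
    (hlt : X.order < G.order) : X.Contains (G.deleteVertex v) := by
  obtain ⟨f⟩ := contains_iff_nonempty_embedding.1 hX
  have hns : ¬Function.Surjective f := fun hs =>
    hlt.not_ge (by simpa [order] using Fintype.card_le_of_surjective f hs)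
  obtain ⟨u, hu⟩ := not_forall.1 hns
  obtain ⟨e, rfl⟩ := hvt u v
  refine contains_deleteVertex_of_notMem_range (e.toEmbedding.comp f) _ ?_
  rintro ⟨a, ha⟩
  exact hu ⟨a, e.injective ha⟩

noncomputable instance isoSetoid : Setoid FinGraph :=
  ⟨Iso, ⟨Iso.refl, Iso.symm, Iso.trans⟩⟩

theorem finite_setOf_contains (G : FinGraph) : {X : FinGraph | X.Contains G}.Finite := by
  refine ((Set.finite_le_nat G.1).biUnion fun n _ => Set.finite_range (Sigma.mk n)).subset ?_
  intro X hX
  exact Set.mem_biUnion (Contains.order_le hX) ⟨X.2, rfl⟩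

theorem exists_transversal (H G : FinGraph) : ∃ T, IsTransversal H G T := by
  classical
  set S := {X : FinGraph | H.Contains X ∧ X.Contains G}
  have hS : S.Finite := (finite_setOf_contains G).subset fun _ hX => hX.2
  refine ⟨(hS.toFinset.image (Quotient.mk isoSetoid)).image Quotient.out, ?_, ?_, ?_⟩
  · simp only [Finset.mem_image, Set.Finite.mem_toFinset, exists_exists_and_eq_and]
    rintro _ ⟨Z, ⟨hHZ, hZG⟩, rfl⟩
    have hZ : (Quotient.mk isoSetoid Z).out.Iso Z := Quotient.mk_out Z
    exact ⟨hHZ.trans hZ.symm.contains, hZ.contains.trans hZG⟩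
  · simp only [Finset.mem_image]
    rintro _ ⟨q, -, rfl⟩ _ ⟨q', -, rfl⟩ hne hiso
    exact hne (congrArg Quotient.out (Quotient.out_equiv_out.1 hiso))
  · intro X hHX hXG
    refine ⟨(Quotient.mk isoSetoid X).out, ?_, Iso.symm (Quotient.mk_out X)⟩
    exact Finset.mem_image_of_mem _ (Finset.mem_image_of_mem _ (hS.mem_toFinset.2 ⟨hHX, hXG⟩))

end FinGraph

namespace IsTransversal

variable {H G : FinGraph} {T : Finset FinGraph}

theorem eq_of_iso (hT : IsTransversal H G T) {X Y : FinGraph} (hX : X ∈ T) (hY : Y ∈ T)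
    (hXY : X.Iso Y) : X = Y :=
  by_contra fun hne => hT.2.1 X hX Y hY hne hXY

open Classical in
theorem filter_contains (hT : IsTransversal H G T) {K : FinGraph} (hKG : K.Contains G) :
    IsTransversal H K (T.filter (·.Contains K)) := by
  refine ⟨fun X hX => ?_, fun X hX Y hY => hT.2.1 X (Finset.mem_filter.1 hX).1 Y
    (Finset.mem_filter.1 hY).1, fun X hHX hXK => ?_⟩
  · rw [Finset.mem_filter] at hX
    exact ⟨(hT.1 X hX.1).1, hX.2⟩
  · obtain ⟨Y, hY, hXY⟩ := hT.2.2 X hHX (hXK.trans hKG)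
    exact ⟨Y, Finset.mem_filter.2 ⟨hY, hXY.symm.contains.trans hXK⟩, hXY⟩

end IsTransversal

theorem IsMobius.apply_eq_zero_of_unique_coatom {mu : FinGraph → FinGraph → ℤ}
    (hmu : IsMobius mu) {H K G : FinGraph} (hKG : K.Contains G) (hKG' : ¬K.Iso G)
    (hcoatom : ∀ X : FinGraph, X.Contains G → ¬X.Iso G → X.Contains K) (hHK : H.Contains K)
    (hHK' : ¬H.Iso K) : mu H G = 0 := by
  classical
  obtain ⟨hinv, -, hsum⟩ := hmu
  obtain ⟨T, hT⟩ := FinGraph.exists_transversal H G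
  have hHG := hHK.trans hKG
  have hHG' : ¬H.Iso G := fun h => hHK' (hHK.antisymm (hKG.trans h.symm.contains))
  obtain ⟨Y, hYT, hGY⟩ := hT.2.2 G hHG (FinGraph.Iso.refl G).contains
  have htop : T.filter (¬·.Contains K) = {Y} := by
    refine Finset.eq_singleton_iff_unique_mem.2 ⟨Finset.mem_filter.2 ⟨hYT, fun hYK =>
      hKG' (hKG.antisymm (hGY.contains.trans hYK))⟩, fun Z hZ => ?_⟩
    rw [Finset.mem_filter] at hZ
    have hZG : Z.Iso G := by_contra fun h => hZ.2 (hcoatom Z (hT.1 Z hZ.1).2 h)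
    exact hT.eq_of_iso hZ.1 hYT (hZG.trans hGY)
  have hsplit := Finset.sum_filter_add_sum_filter_not T (·.Contains K) (mu H)
  rw [(hsum H K hHK _ (hT.filter_contains hKG)).2 hHK', htop, Finset.sum_singleton,
    (hsum H G hHG T hT).2 hHG', zero_add] at hsplit
  rw [hinv H H G Y (.refl H) hGY, hsplit]

/-- If `G` is vertex transitive then `μ(H,G) = 0` whenever `|H| < |G| - 1`. -/
theorem mobius_eq_zero_of_vertexTransitive (mu : FinGraph → FinGraph → ℤ)
    (hmu : IsMobius mu) (G : FinGraph)
    (hvt : ∀ u v : Fin G.1, ∃ e : G.2 ≃g G.2, e u = v)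
    (H : FinGraph) (hH : H.order + 1 < G.order) :
    mu H G = 0 := by
  by_cases hHG : H.Contains G
  swap
  · exact hmu.2.1 H G hHG
  let v : Fin G.1 := ⟨0, by unfold FinGraph.order at hH; omega⟩
  have hK := G.order_deleteVertex v
  exact hmu.apply_eq_zero_of_unique_coatom (G.deleteVertex_contains v)
    (fun hKG => by have := hKG.order_eq; omega)
    (fun X hXG hX => FinGraph.contains_deleteVertex_of_order_lt hvt v hXG
      (hXG.order_lt_of_not_iso hX))
    (FinGraph.contains_deleteVertex_of_order_lt hvt v hHG (by omega))
    (fun hHK => by have := hHK.order_eq; omega)
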